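/- Let A be a C*-algebra and ψ: C₀((0,1], A) → B a *-homomorphism into a C*-algebra B. Define φ: A → B by φ(x) = ψ(ι ⊗ x), where ι ⊗ x denotes the function t ↦ t·x in the cone C₀((0,1], A). Then φ is a completely positive contractive order zero map. -/

import Mathlib

/-!
With `e t = t` and `s t = √t` on `(0,1]` we have `ι x = e • x` and `e = s * s`, hence
`ι (star x * y) = star (s • x) * (s • y)` in the cone and, after applying `ψ`,
`ψ (ι (star x * y)) = star (ψ (s • x)) * ψ (s • y)`. This gives positivity and, entrywise on
matrices, complete positivity. Order zero holds because `ι a * ι b = (e * e) • (a * b)`, and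
contractivity because `‖e‖ ≤ 1`.
-/

open scoped ZeroAtInfty
open Filter Topology

lemma tendsto_subtype_val_cocompact_Ioc (a b : ℝ) :
    Tendsto (Subtype.val : Set.Ioc a b → ℝ) (cocompact _) (𝓝 a) := by
  refine Metric.nhds_basis_ball.tendsto_right_iff.2 fun ε hε => mem_cocompact.2
    ⟨Subtype.val ⁻¹' Set.Icc (a + ε) b, ?_, fun t ht => ?_⟩
  · refine (Topology.IsInducing.subtypeVal.isCompact_preimage_iff ?_).2 isCompact_Icc
    rw [Subtype.range_val]
    exact fun t ht => ⟨by linarith [ht.1], ht.2⟩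
  · have : (t : ℝ) < a + ε := by simpa [t.2.2] using ht
    simp only [Metric.mem_ball, Real.dist_eq, abs_lt]
    constructor <;> linarith [t.2.1]

def ContinuousMap.restrictIocC₀ {a : ℝ} (b : ℝ) (g : C(ℝ, ℝ)) (hg : g a = 0) :
    C₀(Set.Ioc a b, ℝ) where
  toFun t := g t
  continuous_toFun := by fun_prop
  zero_at_infty' := hg ▸ (g.continuous.tendsto a).comp (tendsto_subtype_val_cocompact_Ioc a b)

namespace ZeroAtInftyContinuousMap

variable {X A : Type*} [TopologicalSpace X]

section Module
variable [TopologicalSpace A] [AddCommGroup A] [IsTopologicalAddGroup A] [Module ℝ A]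
  [ContinuousSMul ℝ A]

def smulRight (f : C₀(X, ℝ)) : A →ₗ[ℝ] C₀(X, A) where
  toFun x :=
    { toFun t := f t • x
      continuous_toFun := f.continuous.smul continuous_const
      zero_at_infty' := by simpa using f.zero_at_infty'.smul_const x }
  map_add' x y := by ext; simp [smul_add]
  map_smul' c x := by ext; simp [smul_comm c]

@[simp] lemma smulRight_apply (f : C₀(X, ℝ)) (x : A) (t : X) : f.smulRight x t = f t • x := rfl

end Module

variable [NonUnitalNormedRing A] [NormedSpace ℝ A]

lemma norm_smulRight_le (f : C₀(X, ℝ)) (x : A) : ‖f.smulRight x‖ ≤ ‖f‖ * ‖x‖ := by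
  rw [← norm_toBCF_eq_norm, BoundedContinuousFunction.norm_le (by positivity)]
  intro t
  rw [← norm_toBCF_eq_norm (f := f)]
  simpa [norm_smul] using mul_le_mul_of_nonneg_right (f.toBCF.norm_coe_le_norm t) (norm_nonneg x)

lemma smulRight_mul_smulRight [IsScalarTower ℝ A A] [SMulCommClass ℝ A A]
    (f g : C₀(X, ℝ)) (x y : A) :
    f.smulRight x * g.smulRight y = (f * g).smulRight (x * y) := by
  ext t; simp [smul_mul_smul_comm]

lemma star_smulRight [StarRing A] [NormedStarGroup A] [StarModule ℝ A] (f : C₀(X, ℝ)) (x : A) :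
    star (f.smulRight x) = f.smulRight (star x) := by
  ext t; simp

end ZeroAtInftyContinuousMap

lemma Matrix.map_star_mul_self {n R S : Type*} [Fintype n] [NonUnitalNonAssocSemiring R] [Star R]
    [NonUnitalNonAssocSemiring S] [Star S] (φ : R →+ S) (θ : R → S)
    (hφ : ∀ x y, φ (star x * y) = star (θ x) * θ y) (b : Matrix n n R) :
    (star b * b).map φ = star (b.map θ) * b.map θ := by
  ext i j
  simp [Matrix.mul_apply, map_sum, hφ]

open ZeroAtInftyContinuousMap

/-- If `ψ : C₀((0,1], A) → B` is a *-homomorphism and `φ(x) = ψ(t ↦ t • x)`, then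
`φ` is a completely positive contractive order zero map. Complete positivity is
encoded via matrix amplifications. -/
theorem stmt9 {A B : Type*} [NonUnitalCStarAlgebra A] [NonUnitalCStarAlgebra B]
    [PartialOrder A] [StarOrderedRing A] [PartialOrder B] [StarOrderedRing B]
    (ψ : C₀(Set.Ioc (0:ℝ) 1, A) →⋆ₙₐ[ℂ] B)
    (ι : A → C₀(Set.Ioc (0:ℝ) 1, A))
    (hι : ∀ (x : A) (t : Set.Ioc (0:ℝ) 1), ι x t = t.val • x) :
    (∀ a b : A, 0 ≤ a → 0 ≤ b → a * b = 0 → ψ (ι a) * ψ (ι b) = 0) ∧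
    (∀ a : A, ‖ψ (ι a)‖ ≤ ‖a‖) ∧
    (∀ a : A, 0 ≤ a → 0 ≤ ψ (ι a)) ∧
    (∀ (n : ℕ) (b : Matrix (Fin n) (Fin n) A),
      ∃ c : Matrix (Fin n) (Fin n) B, (star b * b).map (fun x => ψ (ι x)) = star c * c) := by
  set e := (ContinuousMap.id ℝ).restrictIocC₀ (a := 0) 1 rfl
  set s := ContinuousMap.restrictIocC₀ 1 ⟨Real.sqrt, Real.continuous_sqrt⟩ Real.sqrt_zero
  obtain rfl : ι = e.smulRight := funext fun x => ext (hι x)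
  have hs : s * s = e := by ext t; exact Real.mul_self_sqrt t.2.1.le
  have he : ‖e‖ ≤ 1 := by
    rw [← norm_toBCF_eq_norm, BoundedContinuousFunction.norm_le zero_le_one]
    exact fun t => show |(t : ℝ)| ≤ 1 from (abs_of_pos t.2.1).trans_le t.2.2
  have key : ∀ x y : A,
      ψ (e.smulRight (star x * y)) = star (ψ (s.smulRight x)) * ψ (s.smulRight y) := by
    intro x y
    rw [← map_star, ← map_mul, star_smulRight, smulRight_mul_smulRight, hs]
  refine ⟨fun a b _ _ hab => ?_, fun a => ?_, fun a ha => ?_, fun n b => ?_⟩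
  · rw [← map_mul, smulRight_mul_smulRight, hab, map_zero, map_zero]
  · calc ‖ψ (e.smulRight a)‖ ≤ ‖e.smulRight a‖ := NonUnitalStarAlgHom.norm_apply_le ψ _
      _ ≤ ‖e‖ * ‖a‖ := norm_smulRight_le e a
      _ ≤ ‖a‖ := mul_le_of_le_one_left (norm_nonneg a) he
  · obtain ⟨c, rfl⟩ := CStarAlgebra.nonneg_iff_eq_star_mul_self.1 ha
    rw [key]
    exact star_mul_self_nonneg _
  · exact ⟨_, Matrix.map_star_mul_self (ψ.toAddMonoidHom.comp e.smulRight.toAddMonoidHom) _ key b⟩
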